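/- arXiv:2401.12058 — 4 statements merged into one kernel-verified Lean document; each statement's English description precedes it below -/
import Mathlib

section
/- Let G, ζ₁, ζ₂, ζ₃ > 0 with ζ₁ > max(ζ₂, ζ₃), let a₁, ..., a_l ∈ ℝ^d with ‖a_r‖ ≤ G for all r, and define h(x) = max(ζ₃, max_{1≤r≤l} ⟨a_r, x⟩). Suppose x₀ and index r₀ satisfy ⟨a_{r₀}, x₀⟩ = ζ₁ and max_{r ≠ r₀} ⟨a_r, x₀⟩ ≤ ζ₂. Then for any 0 < δ < (ζ₁ − max(ζ₂, ζ₃))/(2G), the smoothed function h̃(x) = E_{v~Unif(B)}[h(x + δv)] satisfies h̃(x₀) = ⟨a_{r₀}, x₀⟩ and ∇h̃(x₀) = a_{r₀}. -/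
/-!
Within distance `(ζ₁ - max ζ₂ ζ₃) / (2G)` of `x₀` each `⟨a_r, ·⟩` moves by at most half the gap
`ζ₁ - max ζ₂ ζ₃`, so there `h` coincides with the linear piece `⟨a_{r₀}, ·⟩`. For `x` close enough to
`x₀` the smoothing at `x` only samples `h` on that region, and since the uniform measure on the unit
ball is symmetric, the average of the linear piece over `x + δB` is its value at `x`. So the smoothed
function equals `⟨a_{r₀}, ·⟩` on a neighbourhood of `x₀`, which gives both its value and its gradient.
-/

open MeasureTheory ProbabilityTheory Metric Set RealInnerProductSpace

theorem MeasureTheory.Measure.IsNegInvariant.cond {E : Type*} [MeasurableSpace E] [InvolutiveNeg E]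
    [MeasurableNeg E] (μ : Measure E) [μ.IsNegInvariant] {s : Set E} (hs : -s = s) :
    (μ[|s]).IsNegInvariant := by
  have hrestrict : Measure.map Neg.neg (μ.restrict s) = μ.restrict s := by
    have := (MeasurableEquiv.neg E).restrict_map μ s
    simp only [MeasurableEquiv.neg_apply, Set.neg_preimage, hs, Measure.map_neg_eq_self] at this
    exact this.symm
  exact ⟨by rw [ProbabilityTheory.cond, Measure.neg, Measure.map_smul, hrestrict]⟩

theorem integral_id_eq_zero_of_isNegInvariant {E : Type*} [NormedAddCommGroup E] [NormedSpace ℝ E]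
    [MeasurableSpace E] [MeasurableNeg E] (μ : Measure E) [μ.IsNegInvariant] :
    ∫ v, v ∂μ = 0 := by
  have : IsAddTorsionFree E := .of_isTorsionFree ℝ E
  have hsymm := integral_neg_eq_self (fun v : E => v) μ
  rwa [integral_neg, neg_eq_self] at hsymm

theorem integral_inner_add_smul_eq_inner {E : Type*} [NormedAddCommGroup E]
    [InnerProductSpace ℝ E] [CompleteSpace E] [MeasurableSpace E] [MeasurableNeg E]
    {ν : Measure E} [IsProbabilityMeasure ν] [ν.IsNegInvariant] (hν : Integrable (fun v => v) ν)
    (a x : E) (δ : ℝ) : ∫ v, ⟪a, x + δ • v⟫ ∂ν = ⟪a, x⟫ := by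
  simp only [inner_add_right, real_inner_smul_right]
  rw [integral_add (integrable_const _) ((hν.const_inner a).const_mul δ), integral_const,
    integral_const_mul, integral_inner hν, integral_id_eq_zero_of_isNegInvariant, inner_zero_right]
  simp

theorem integrable_id_cond_ball {E : Type*} [NormedAddCommGroup E] [MeasurableSpace E]
    [OpensMeasurableSpace E] [SecondCountableTopology E] (μ : Measure E) (r : ℝ) :
    Integrable (fun v => v) (μ[|ball (0 : E) r]) :=
  .of_bound aestronglyMeasurable_id r <|
    ae_cond_of_forall_mem measurableSet_ball fun _ hv => (mem_ball_zero_iff.1 hv).le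

theorem hasGradientAt_inner_right {F : Type*} [NormedAddCommGroup F] [InnerProductSpace ℝ F]
    [CompleteSpace F] (a x : F) : HasGradientAt (⟪a, ·⟫) a x := by
  rw [hasGradientAt_iff_hasFDerivAt]
  exact (InnerProductSpace.toDual ℝ F a).hasFDerivAt

section BallSmoothing

variable {E : Type*} [NormedAddCommGroup E] [InnerProductSpace ℝ E] [FiniteDimensional ℝ E]
  [MeasurableSpace E] [BorelSpace E] (μ : Measure E) [μ.IsAddHaarMeasure]

instance : IsProbabilityMeasure (μ[|ball (0 : E) 1]) :=
  cond_isProbabilityMeasure_of_finite (measure_ball_pos μ 0 one_pos).ne' measure_ball_lt_top.ne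

instance : (μ[|ball (0 : E) 1]).IsNegInvariant :=
  .cond μ (by simp)

/-- The smoothing `h̃` of the paper, `Unif(B)` being `μ` conditioned on the unit ball. -/
noncomputable def ballSmoothing (δ : ℝ) (f : E → ℝ) (x : E) : ℝ :=
  ∫ v, f (x + δ • v) ∂μ[|ball 0 1]

variable {μ}

theorem ballSmoothing_eq_inner_of_eqOn {δ : ℝ} {f : E → ℝ} {a x : E}
    (hf : EqOn f (⟪a, ·⟫) (closedBall x |δ|)) : ballSmoothing μ δ f x = ⟪a, x⟫ := by
  rw [ballSmoothing, ← integral_inner_add_smul_eq_inner (integrable_id_cond_ball μ 1) a x δ]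
  refine integral_congr_ae <| ae_cond_of_forall_mem measurableSet_ball fun v hv => hf ?_
  rw [mem_closedBall, dist_self_add_left, norm_smul, Real.norm_eq_abs]
  exact mul_le_of_le_one_right (abs_nonneg δ) (mem_ball_zero_iff.1 hv).le

theorem hasGradientAt_ballSmoothing_of_eqOn {δ ρ : ℝ} {f : E → ℝ} {a x₀ : E}
    (hf : EqOn f (⟪a, ·⟫) (ball x₀ ρ)) (hδ : |δ| < ρ) :
    HasGradientAt (ballSmoothing μ δ f) a x₀ := by
  have hnear : ballSmoothing μ δ f =ᶠ[nhds x₀] (⟪a, ·⟫) := by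
    filter_upwards [ball_mem_nhds x₀ (sub_pos.2 hδ)] with x hx
    refine ballSmoothing_eq_inner_of_eqOn (hf.mono (closedBall_subset_ball' ?_))
    rw [mem_ball] at hx
    linarith
  exact (hasGradientAt_inner_right a x₀).congr_of_eventuallyEq hnear

end BallSmoothing

theorem max_iSup_inner_eq_of_two_mul_dist_le {F ι : Type*} [NormedAddCommGroup F]
    [InnerProductSpace ℝ F] [Finite ι] {a : ι → F} {G ζ₁ ζ₂ ζ₃ : ℝ} (ha : ∀ r, ‖a r‖ ≤ G)
    {x₀ y : F} {r₀ : ι} (hr₀ : ⟪a r₀, x₀⟫ = ζ₁) (hother : ∀ r, r ≠ r₀ → ⟪a r, x₀⟫ ≤ ζ₂)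
    (hy : 2 * G * dist y x₀ ≤ ζ₁ - max ζ₂ ζ₃) :
    max ζ₃ (⨆ r, ⟪a r, y⟫) = ⟪a r₀, y⟫ := by
  have hmove : ∀ r, |⟪a r, y⟫ - ⟪a r, x₀⟫| ≤ G * dist y x₀ := fun r => by
    rw [← inner_sub_right, dist_eq_norm]
    exact (abs_real_inner_le_norm _ _).trans (mul_le_mul_of_nonneg_right (ha r) (norm_nonneg _))
  have hG : 0 ≤ G * dist y x₀ := mul_nonneg ((norm_nonneg _).trans (ha r₀)) dist_nonneg
  have hr₀_y := (abs_le.1 (hmove r₀)).1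
  have hdom : ∀ r, ⟪a r, y⟫ ≤ ⟪a r₀, y⟫ := fun r => by
    rcases eq_or_ne r r₀ with rfl | hr
    · rfl
    · linarith [(abs_le.1 (hmove r)).2, hother r hr, le_max_left ζ₂ ζ₃]
  have : Nonempty ι := ⟨r₀⟩
  have hsup : ⨆ r, ⟪a r, y⟫ = ⟪a r₀, y⟫ :=
    le_antisymm (ciSup_le hdom) (le_ciSup (Set.finite_range fun r => ⟪a r, y⟫).bddAbove r₀)
  rw [hsup, max_eq_right]
  linarith [le_max_right ζ₂ ζ₃]

theorem smoothing_linear_region_general (d l : ℕ)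
    (G ζ₁ ζ₂ ζ₃ δ : ℝ) (hG : 0 < G)
    (hδ0 : 0 < δ) (hδ : δ < (ζ₁ - max ζ₂ ζ₃) / (2 * G))
    (a : Fin l → EuclideanSpace ℝ (Fin d)) (ha : ∀ r, ‖a r‖ ≤ G)
    (x₀ : EuclideanSpace ℝ (Fin d)) (r₀ : Fin l)
    (hr₀ : ⟪a r₀, x₀⟫ = ζ₁) (hother : ∀ r, r ≠ r₀ → ⟪a r, x₀⟫ ≤ ζ₂) :
    (∫ v, max ζ₃ (⨆ r, ⟪a r, x₀ + δ • v⟫)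
        ∂((volume (Metric.ball (0 : EuclideanSpace ℝ (Fin d)) 1))⁻¹ •
            volume.restrict (Metric.ball (0 : EuclideanSpace ℝ (Fin d)) 1)))
      = ⟪a r₀, x₀⟫ ∧
    gradient
      (fun x => ∫ v, max ζ₃ (⨆ r, ⟪a r, x + δ • v⟫)
        ∂((volume (Metric.ball (0 : EuclideanSpace ℝ (Fin d)) 1))⁻¹ •
            volume.restrict (Metric.ball (0 : EuclideanSpace ℝ (Fin d)) 1))) x₀
      = a r₀ := by
  set ρ := (ζ₁ - max ζ₂ ζ₃) / (2 * G)
  have hlinear : EqOn (fun y => max ζ₃ (⨆ r, ⟪a r, y⟫)) (⟪a r₀, ·⟫) (ball x₀ ρ) := fun y hy => by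
    refine max_iSup_inner_eq_of_two_mul_dist_le ha hr₀ hother ?_
    rw [mem_ball, lt_div_iff₀ (by positivity)] at hy
    linarith
  have hδρ : |δ| < ρ := by rwa [abs_of_pos hδ0]
  exact ⟨ballSmoothing_eq_inner_of_eqOn (hlinear.mono (closedBall_subset_ball hδρ)),
    (hasGradientAt_ballSmoothing_of_eqOn hlinear hδρ).gradient⟩

/-- Smoothing in a region where a piecewise-max function is affine: let
`h(x) = max(ζ₃, max_r ⟨a_r, x⟩)` with `‖a_r‖ ≤ G`, and suppose `⟨a_{r₀}, x₀⟩ = ζ₁`,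
`⟨a_r, x₀⟩ ≤ ζ₂` for `r ≠ r₀`, where `ζ₁ > max(ζ₂, ζ₃) > 0`.  Then for
`0 < δ < (ζ₁ - max(ζ₂, ζ₃))/(2G)`, the randomized smoothing
`h̃(x) = E_{v ~ Unif(B)}[h(x + δv)]` satisfies `h̃(x₀) = ⟨a_{r₀}, x₀⟩` and
`∇h̃(x₀) = a_{r₀}`. -/
theorem smoothing_linear_region (d l : ℕ) (hd : 1 ≤ d)
    (G ζ₁ ζ₂ ζ₃ δ : ℝ) (hG : 0 < G) (hζ₁ : 0 < ζ₁) (hζ₂ : 0 < ζ₂) (hζ₃ : 0 < ζ₃)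
    (hζ : max ζ₂ ζ₃ < ζ₁)
    (hδ0 : 0 < δ) (hδ : δ < (ζ₁ - max ζ₂ ζ₃) / (2 * G))
    (a : Fin l → EuclideanSpace ℝ (Fin d)) (ha : ∀ r, ‖a r‖ ≤ G)
    (x₀ : EuclideanSpace ℝ (Fin d)) (r₀ : Fin l)
    (hr₀ : ⟪a r₀, x₀⟫ = ζ₁) (hother : ∀ r, r ≠ r₀ → ⟪a r, x₀⟫ ≤ ζ₂) :
    (∫ v, max ζ₃ (⨆ r, ⟪a r, x₀ + δ • v⟫)
        ∂((volume (Metric.ball (0 : EuclideanSpace ℝ (Fin d)) 1))⁻¹ •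
            volume.restrict (Metric.ball (0 : EuclideanSpace ℝ (Fin d)) 1)))
      = ⟪a r₀, x₀⟫ ∧
    gradient
      (fun x => ∫ v, max ζ₃ (⨆ r, ⟪a r, x + δ • v⟫)
        ∂((volume (Metric.ball (0 : EuclideanSpace ℝ (Fin d)) 1))⁻¹ •
            volume.restrict (Metric.ball (0 : EuclideanSpace ℝ (Fin d)) 1))) x₀
      = a r₀ :=
  smoothing_linear_region_general d l G ζ₁ ζ₂ ζ₃ δ hG hδ0 hδ a ha x₀ r₀ hr₀ hother
end

section
/- Let n ≥ 2048 and δ = 1/(4n²). Let U be a finite set with |U| ≥ n^{4n}, and let V₁, ..., V_n be i.i.d. random subsets of U where each element is included in each V_i independently with probability δ. For t ∈ [n], let P_t = ∩_{i<t} V_i and S_t = ∩_{i≥t} (U \ V_i), and when P_t ≠ ∅ let J_t be the element of P_t of minimal index (under a fixed enumeration of U). Then Pr(for all t ≤ n: P_t ≠ ∅ and J_t ∈ S_t) ≥ 1 − n(1 − δ^n)^{|U|} − n(1 − (1−δ)^n) ≥ 1/2. -/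
open MeasureTheory ProbabilityTheory Finset

/-!
The complement of the good event is covered by the `2n` events `P_t = ∅` and
"`J_t ∈ V_i` for some `i ≥ t`". The first is the intersection over `u ∈ U` of the events
"`u ∉ V_i` for some `i < t`", which depend on disjoint rows of coordinates and are therefore
independent, each of probability at most `1 - δⁿ`. For the second, split according to the value
`u` of `J_t`: the event `J_t = u` is determined by the coordinates `(v, i)` with `i < t`, so it is
independent of "`u ∈ V_i` for some `i ≥ t`", whose probability is at most `1 - (1 - δ)ⁿ`.
Finally `(1 - x)^N ≤ 1 / (1 + N x)` with `N δⁿ ≥ 4n`, and Bernoulli's inequality, bound the two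
sums by `1/4` each.
-/

lemma dependsOn_exists_mem_ne {ι β : Type*} (S : Finset ι) (b : β) :
    DependsOn (fun g : ι → β => ∃ i ∈ S, g i ≠ b) S := fun _ _ h =>
  propext <| exists_congr fun i => and_congr_right fun hi => by rw [h i hi]

section Independence

variable {Ω ι β : Type*} [MeasurableSpace Ω] {μ : Measure Ω} [MeasurableSpace β]
  [MeasurableSingletonClass β] {X : ι → Ω → β}

lemma measurableSet_setOf_of_finite [Finite ι] [Countable β] (hX : ∀ i, Measurable (X i))
    (Q : (ι → β) → Prop) : MeasurableSet {ω | Q (X · ω)} :=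
  measurable_pi_lambda _ hX (Set.to_countable {g | Q g}).measurableSet

lemma ProbabilityTheory.iIndepFun.measureReal_inter_eq_mul_of_dependsOn [Countable β]
    (hindep : iIndepFun X μ) (hX : ∀ i, Measurable (X i)) {S T : Finset ι}
    (hST : Disjoint S T) {Q R : (ι → β) → Prop} (hQ : DependsOn Q S) (hR : DependsOn R T) :
    μ.real ({ω | Q (X · ω)} ∩ {ω | R (X · ω)}) =
      μ.real {ω | Q (X · ω)} * μ.real {ω | R (X · ω)} := by
  obtain ⟨Q', rfl⟩ := dependsOn_iff_exists_comp.1 hQ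
  obtain ⟨R', rfl⟩ := dependsOn_iff_exists_comp.1 hR
  have := (hindep.indepFun_finset S T hST hX).measure_inter_preimage_eq_mul {h | Q' h}
    {h | R' h} (Set.to_countable _).measurableSet (Set.to_countable _).measurableSet
  simp only [measureReal_def, ← ENNReal.toReal_mul]
  exact congrArg ENNReal.toReal this

lemma ProbabilityTheory.iIndepFun.measureReal_setOf_forall_eq_prod_of_dependsOn [Countable β]
    [IsProbabilityMeasure μ] {κ : Type*} (hindep : iIndepFun X μ) (hX : ∀ i, Measurable (X i))
    (s : Finset κ) {S : κ → Finset ι} (hS : (s : Set κ).PairwiseDisjoint S)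
    {Q : κ → (ι → β) → Prop} (hQ : ∀ k ∈ s, DependsOn (Q k) (S k)) :
    μ.real {ω | ∀ k ∈ s, Q k (X · ω)} = ∏ k ∈ s, μ.real {ω | Q k (X · ω)} := by
  classical
  induction s using Finset.induction_on with
  | empty => simp
  | insert a s ha ih =>
    have hrest : DependsOn (fun g => ∀ k ∈ s, Q k g) (s.biUnion S : Set ι) := fun g g' h =>
      propext <| forall₂_congr fun k hk => (hQ k (mem_insert_of_mem hk) fun i hi =>
        h i (mem_coe.2 (mem_biUnion.2 ⟨k, hk, hi⟩))).to_iff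
    have hdisj : Disjoint (S a) (s.biUnion S) := (disjoint_biUnion_right _ _ _).2 fun k hk =>
      hS (mem_insert_self a s) (mem_insert_of_mem hk) (ne_of_mem_of_not_mem hk ha).symm
    simp only [forall_mem_insert, Set.ofPred_and, prod_insert ha]
    rw [hindep.measureReal_inter_eq_mul_of_dependsOn hX hdisj (hQ a (mem_insert_self a s)) hrest,
      ih (hS.subset (by simp)) fun k hk => hQ k (mem_insert_of_mem hk)]

lemma ProbabilityTheory.iIndepFun.measureReal_exists_ne_le [IsProbabilityMeasure μ]
    (hindep : iIndepFun X μ) (hX : ∀ i, Measurable (X i)) {S : Finset ι} {b : β} {q : ℝ}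
    (hq : ∀ i ∈ S, μ.real {ω | X i ω = b} = q) (hq₀ : 0 ≤ q) (hq₁ : q ≤ 1) {k : ℕ}
    (hk : #S ≤ k) :
    μ.real {ω | ∃ i ∈ S, X i ω ≠ b} ≤ 1 - q ^ k := by
  have hcompl : {ω | ∃ i ∈ S, X i ω ≠ b} = (⋂ i ∈ S, X i ⁻¹' {b})ᶜ := by
    ext ω; simp
  have hprod : μ.real (⋂ i ∈ S, X i ⁻¹' {b}) = q ^ #S := by
    rw [measureReal_def,
      hindep.measure_inter_preimage_eq_mul S fun _ _ => measurableSet_singleton b,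
      ENNReal.toReal_prod, ← prod_const]
    exact prod_congr rfl hq
  rw [hcompl, probReal_compl_eq_one_sub (S.measurableSet_biInter fun i _ =>
    hX i (measurableSet_singleton b)), hprod]
  linarith [pow_le_pow_of_le_one hq₀ hq₁ hk]

end Independence

lemma MeasureTheory.measureReal_iUnion_inter_le {α κ : Type*} [MeasurableSpace α]
    {μ : Measure α} [IsProbabilityMeasure μ] [Fintype κ] {D E : κ → Set α}
    (hD : Pairwise (Function.onFun Disjoint D)) (hDm : ∀ k, MeasurableSet (D k))
    (hDE : ∀ k, μ.real (D k ∩ E k) = μ.real (D k) * μ.real (E k)) {c : ℝ} (hc : 0 ≤ c)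
    (hE : ∀ k, μ.real (E k) ≤ c) :
    μ.real (⋃ k, D k ∩ E k) ≤ c :=
  calc μ.real (⋃ k, D k ∩ E k) ≤ ∑ k, μ.real (D k) * μ.real (E k) :=
        (measureReal_iUnion_fintype_le _).trans_eq (sum_congr rfl fun k _ => hDE k)
    _ ≤ ∑ k, μ.real (D k) * c :=
        sum_le_sum fun k _ => mul_le_mul_of_nonneg_left (hE k) measureReal_nonneg
    _ = μ.real (⋃ k, D k) * c := by rw [← sum_mul, measureReal_iUnion_fintype hD hDm]
    _ ≤ c := mul_le_of_le_one_left hc measureReal_le_one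

lemma one_sub_one_sub_pow_le {δ : ℝ} (hδ : δ ≤ 2) (n : ℕ) : 1 - (1 - δ) ^ n ≤ n * δ := by
  have := one_add_mul_le_pow (a := -δ) (by linarith) n
  rw [← sub_eq_add_neg] at this
  linarith

lemma one_sub_pow_mul_one_add_mul_le_one {x : ℝ} (hx₀ : 0 ≤ x) (hx₁ : x ≤ 1) (m : ℕ) :
    (1 - x) ^ m * (1 + m * x) ≤ 1 :=
  calc (1 - x) ^ m * (1 + m * x) ≤ (1 - x) ^ m * (1 + x) ^ m :=
        mul_le_mul_of_nonneg_left (one_add_mul_le_pow (by linarith) m) (by bound)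
    _ = (1 - x ^ 2) ^ m := by rw [← mul_pow]; ring
    _ ≤ 1 := pow_le_one₀ (by nlinarith) (by nlinarith)

lemma four_mul_mul_four_mul_sq_pow_le {n : ℕ} (hn : 4 ≤ n) :
    4 * n * (4 * n ^ 2) ^ n ≤ n ^ (4 * n) :=
  calc 4 * n * (4 * n ^ 2) ^ n ≤ n ^ n * (n ^ 3) ^ n := by
        refine Nat.mul_le_mul ?_ (Nat.pow_le_pow_left ?_ n)
        · calc 4 * n ≤ n ^ 2 := by nlinarith
            _ ≤ n ^ n := Nat.pow_le_pow_right (by omega) (by omega)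
        · calc 4 * n ^ 2 ≤ n * n ^ 2 := Nat.mul_le_mul_right _ hn
            _ = n ^ 3 := by ring
    _ = n ^ (4 * n) := by ring

lemma natCast_mul_one_sub_inv_pow_pow_le {n N : ℕ} (hn : 4 ≤ n) (hN : n ^ (4 * n) ≤ N) :
    n * (1 - (1 / (4 * (n : ℝ) ^ 2)) ^ n) ^ N ≤ 1 / 4 := by
  set x := (1 / (4 * (n : ℝ) ^ 2)) ^ n
  have hn₄ : (4 : ℝ) ≤ n := by exact_mod_cast hn
  have hx₀ : 0 < x := by positivity
  have hx₁ : x ≤ 1 := pow_le_one₀ (by positivity) (by rw [div_le_one (by positivity)]; nlinarith)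
  have hNx : 4 * n ≤ N * x := by
    have : (4 * n * (4 * n ^ 2) ^ n : ℝ) ≤ N := by
      exact_mod_cast (four_mul_mul_four_mul_sq_pow_le hn).trans hN
    rw [← div_le_iff₀ hx₀]
    simpa [x, div_pow] using this
  have := one_sub_pow_mul_one_add_mul_le_one hx₀.le hx₁ N
  rw [← le_div_iff₀ (by positivity)] at this
  calc n * (1 - x) ^ N ≤ n * (1 / (1 + N * x)) := by gcongr
    _ ≤ 1 / 4 := by rw [mul_one_div, div_le_div_iff₀ (by positivity) (by norm_num)]; linarith

lemma natCast_mul_one_sub_one_sub_inv_pow_le {n : ℕ} (hn : 1 ≤ n) :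
    n * (1 - (1 - 1 / (4 * (n : ℝ) ^ 2)) ^ n) ≤ 1 / 4 := by
  have hn₁ : (1 : ℝ) ≤ n := by exact_mod_cast hn
  calc n * (1 - (1 - 1 / (4 * (n : ℝ) ^ 2)) ^ n) ≤ n * (n * (1 / (4 * (n : ℝ) ^ 2))) :=
        mul_le_mul_of_nonneg_left (one_sub_one_sub_pow_le (by
          rw [div_le_iff₀ (by positivity)]; nlinarith) n) (by positivity)
    _ = 1 / 4 := by field_simp

section Survivors

variable {n N : ℕ}

/-- For the configuration `g (u, i) = decide (u ∈ V_i)` this is the paper's `P_t`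
(with `t` counted from `0`). -/
def survivors (g : Fin N × Fin n → Bool) (t : Fin n) : Finset (Fin N) :=
  univ.filter fun u => ∀ i : Fin n, i.val < t.val → g (u, i) = true

/-- The paper's `P_t ≠ ∅ ∧ J_t ∈ S_t`. -/
def IsGoodAt (g : Fin N × Fin n → Bool) (t : Fin n) : Prop :=
  ∃ hne : (survivors g t).Nonempty, ∀ i : Fin n, t.val ≤ i.val →
    g ((survivors g t).min' hne, i) = false

lemma notMem_survivors_iff {g : Fin N × Fin n → Bool} {t : Fin n} {u : Fin N} :
    u ∉ survivors g t ↔ ∃ p ∈ {u} ×ˢ Iio t, g p ≠ true := by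
  simp [survivors]

lemma dependsOn_survivors (t : Fin n) :
    DependsOn (fun g : Fin N × Fin n → Bool => survivors g t)
      ((univ ×ˢ Iio t : Finset (Fin N × Fin n)) : Set (Fin N × Fin n)) := fun g g' h => by
  ext u
  simp only [survivors, mem_filter, mem_univ, true_and]
  exact forall₂_congr fun i hi => by
    rw [h (u, i) (mem_coe.2 (mem_product.2 ⟨mem_univ u, mem_Iio.2 (Fin.lt_def.2 hi)⟩))]

lemma survivors_eq_empty_or_of_not_isGoodAt {g : Fin N × Fin n → Bool} {t : Fin n}
    (h : ¬ IsGoodAt g t) :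
    survivors g t = ∅ ∨
      ∃ u, IsLeast (survivors g t : Set (Fin N)) u ∧ ∃ p ∈ {u} ×ˢ Ici t, g p ≠ false := by
  by_cases hne : (survivors g t).Nonempty
  · obtain ⟨i, hi, hg⟩ :
        ∃ i : Fin n, t.val ≤ i.val ∧ g ((survivors g t).min' hne, i) ≠ false := by
      simpa [IsGoodAt, hne] using h
    exact .inr ⟨_, isLeast_min' _ hne, (_, i),
      mem_product.2 ⟨mem_singleton_self _, mem_Ici.2 (Fin.le_def.2 hi)⟩, hg⟩
  · exact .inl (not_nonempty_iff_eq_empty.1 hne)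

variable {Ω : Type*} [MeasurableSpace Ω] {μ : Measure Ω} [IsProbabilityMeasure μ]
  {χ : Fin N × Fin n → Ω → Bool} {δ : ℝ}

lemma measureReal_survivors_eq_empty_le (hindep : iIndepFun χ μ) (hχ : ∀ p, Measurable (χ p))
    (hδ : ∀ p, μ.real {ω | χ p ω = true} = δ) (hδ₀ : 0 ≤ δ) (hδ₁ : δ ≤ 1) (t : Fin n) :
    μ.real {ω | survivors (χ · ω) t = ∅} ≤ (1 - δ ^ n) ^ N := by
  have hrows : {ω | survivors (χ · ω) t = ∅} =
      {ω | ∀ u ∈ univ, ∃ p ∈ {u} ×ˢ Iio t, χ p ω ≠ true} := by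
    ext ω
    simp only [eq_empty_iff_forall_notMem, notMem_survivors_iff, Set.mem_ofPred_eq, mem_univ,
      true_imp_iff]
  have hdisj : ((univ : Finset (Fin N)) : Set (Fin N)).PairwiseDisjoint fun u => {u} ×ˢ Iio t :=
    fun u _ v _ huv => disjoint_product.2 (.inl (disjoint_singleton.2 huv))
  rw [hrows, hindep.measureReal_setOf_forall_eq_prod_of_dependsOn hχ univ hdisj
    fun u _ => dependsOn_exists_mem_ne _ _]
  calc ∏ u, μ.real {ω | ∃ p ∈ {u} ×ˢ Iio t, χ p ω ≠ true} ≤ ∏ _u : Fin N, (1 - δ ^ n) :=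
        prod_le_prod (fun _ _ => measureReal_nonneg) fun u _ =>
          hindep.measureReal_exists_ne_le hχ (fun p _ => hδ p) hδ₀ hδ₁ (by simp)
    _ = (1 - δ ^ n) ^ N := by simp

lemma measureReal_exists_isLeast_survivors_le (hindep : iIndepFun χ μ)
    (hχ : ∀ p, Measurable (χ p)) (hδ : ∀ p, μ.real {ω | χ p ω = true} = δ) (hδ₀ : 0 ≤ δ)
    (hδ₁ : δ ≤ 1) (t : Fin n) :
    μ.real {ω | ∃ u, IsLeast (survivors (χ · ω) t : Set (Fin N)) u ∧
      ∃ p ∈ {u} ×ˢ Ici t, χ p ω ≠ false} ≤ 1 - (1 - δ) ^ n := by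
  have hfalse p : μ.real {ω | χ p ω = false} = 1 - δ := by
    have hcompl : {ω | χ p ω = false} = {ω | χ p ω = true}ᶜ := by ext ω; simp
    have hm : MeasurableSet {ω | χ p ω = true} := hχ p (measurableSet_singleton true)
    rw [hcompl, probReal_compl_eq_one_sub hm, hδ p]
  have hsplit (u : Fin N) : Disjoint (univ ×ˢ Iio t) ({u} ×ˢ Ici t) :=
    disjoint_product.2 <| .inr <| disjoint_left.2 fun i hi hi' =>
      not_lt.2 (mem_Ici.1 hi') (mem_Iio.1 hi)
  have hD : Pairwise (Function.onFun Disjoint fun u : Fin N =>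
      {ω | IsLeast (survivors (χ · ω) t : Set (Fin N)) u}) := fun u v huv =>
    Set.disjoint_left.2 fun ω hu hv => huv (hu.unique hv)
  have hDE (u : Fin N) := hindep.measureReal_inter_eq_mul_of_dependsOn hχ (hsplit u)
    (Q := fun g => IsLeast (survivors g t : Set (Fin N)) u)
    (fun g g' h => by simp only [dependsOn_survivors t h]) (dependsOn_exists_mem_ne _ false)
  have hE (u : Fin N) : μ.real {ω | ∃ p ∈ {u} ×ˢ Ici t, χ p ω ≠ false} ≤ 1 - (1 - δ) ^ n :=
    hindep.measureReal_exists_ne_le hχ (fun p _ => hfalse p) (by linarith) (by linarith)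
      (by simp)
  have hc : 0 ≤ 1 - (1 - δ) ^ n := by
    linarith [pow_le_one₀ (by linarith : 0 ≤ 1 - δ) (by linarith : 1 - δ ≤ 1) (n := n)]
  convert measureReal_iUnion_inter_le hD (fun u => measurableSet_setOf_of_finite hχ
    fun g => IsLeast (survivors g t : Set (Fin N)) u) hDE hc hE using 2
  ext ω
  simp only [Set.mem_ofPred_eq, Set.mem_iUnion, Set.mem_inter_iff]

lemma measureReal_setOf_forall_isGoodAt_ge (hindep : iIndepFun χ μ)
    (hχ : ∀ p, Measurable (χ p)) (hδ : ∀ p, μ.real {ω | χ p ω = true} = δ) (hδ₀ : 0 ≤ δ)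
    (hδ₁ : δ ≤ 1) :
    1 - n * ((1 - δ ^ n) ^ N + (1 - (1 - δ) ^ n)) ≤ μ.real {ω | ∀ t, IsGoodAt (χ · ω) t} := by
  set G := {ω | ∀ t, IsGoodAt (χ · ω) t}
  have hbad : Gᶜ ⊆ ⋃ t, {ω | survivors (χ · ω) t = ∅} ∪ {ω | ∃ u,
      IsLeast (survivors (χ · ω) t : Set (Fin N)) u ∧ ∃ p ∈ {u} ×ˢ Ici t, χ p ω ≠ false} :=
    fun ω hω => Set.mem_iUnion.2 <| (not_forall.1 hω).imp fun _ =>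
      survivors_eq_empty_or_of_not_isGoodAt
  have hGc : μ.real Gᶜ = 1 - μ.real G :=
    probReal_compl_eq_one_sub (measurableSet_setOf_of_finite hχ fun g => ∀ t, IsGoodAt g t)
  have hunion : μ.real Gᶜ ≤ n * ((1 - δ ^ n) ^ N + (1 - (1 - δ) ^ n)) :=
    calc μ.real Gᶜ ≤ ∑ t : Fin n, ((1 - δ ^ n) ^ N + (1 - (1 - δ) ^ n)) :=
          (measureReal_mono hbad).trans <| (measureReal_iUnion_fintype_le _).trans <|
            sum_le_sum fun t _ => (measureReal_union_le _ _).trans <| add_le_add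
              (measureReal_survivors_eq_empty_le hindep hχ hδ hδ₀ hδ₁ t)
              (measureReal_exists_isLeast_survivors_le hindep hχ hδ hδ₀ hδ₁ t)
      _ = _ := by rw [sum_const, card_fin, nsmul_eq_mul]
  linarith

end Survivors

/-- SGD good event: let `n ≥ 2048`, `δ = 1/(4n²)`, and let `U = Fin N` with `N ≥ n^{4n}`
(a fixed enumeration).  Let `V₁, …, V_n` be i.i.d. random subsets of `U` where each
element is included in each `Vᵢ` independently with probability `δ` (modelled by
independent Boolean indicators `χ (u, i)`).  With `P_t = ∩_{i<t} V_i`,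
`S_t = ∩_{i≥t} (U \ V_i)` and `J_t` the minimal-index element of `P_t`, the probability
that for all `t`, `P_t ≠ ∅` and `J_t ∈ S_t`, is at least
`1 - n(1 - δⁿ)^N - n(1 - (1-δ)ⁿ) ≥ 1/2`. -/
theorem sgd_good_event (n N : ℕ) (hn : 2048 ≤ n) (hN : n ^ (4 * n) ≤ N)
    (Ω : Type*) [MeasurableSpace Ω] (μ : Measure Ω) [IsProbabilityMeasure μ]
    (χ : (Fin N × Fin n) → Ω → Bool)
    (hmeas : ∀ p, Measurable (χ p))
    (hindep : iIndepFun χ μ)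
    (hdist : ∀ p, μ {ω | χ p ω = true} = ENNReal.ofReal (1 / (4 * (n : ℝ) ^ 2))) :
    (1 : ℝ) / 2 ≤ 1 - n * (1 - (1 / (4 * (n : ℝ) ^ 2)) ^ n) ^ N
        - n * (1 - (1 - 1 / (4 * (n : ℝ) ^ 2)) ^ n) ∧
    ENNReal.ofReal (1 - n * (1 - (1 / (4 * (n : ℝ) ^ 2)) ^ n) ^ N
        - n * (1 - (1 - 1 / (4 * (n : ℝ) ^ 2)) ^ n))
      ≤ μ {ω | ∀ t : Fin n,
          ∃ hne : (Finset.univ.filter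
              (fun u : Fin N => ∀ i : Fin n, i.val < t.val → χ (u, i) ω = true)).Nonempty,
            ∀ i : Fin n, t.val ≤ i.val →
              χ ((Finset.univ.filter
                (fun u : Fin N => ∀ i : Fin n, i.val < t.val → χ (u, i) ω = true)).min' hne,
                i) ω = false} := by
  have hn₁ : (1 : ℝ) ≤ n := by exact_mod_cast (by omega : 1 ≤ n)
  have hδ₀ : 0 ≤ 1 / (4 * (n : ℝ) ^ 2) := by positivity
  have hδ₁ : 1 / (4 * (n : ℝ) ^ 2) ≤ 1 := by rw [div_le_one (by positivity)]; nlinarith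
  have hδ p : μ.real {ω | χ p ω = true} = 1 / (4 * (n : ℝ) ^ 2) := by
    rw [measureReal_def, hdist, ENNReal.toReal_ofReal hδ₀]
  have hempty := natCast_mul_one_sub_inv_pow_pow_le (by omega) hN
  have hhit := natCast_mul_one_sub_one_sub_inv_pow_le (by omega : 1 ≤ n)
  have hgood := measureReal_setOf_forall_isGoodAt_ge hindep hmeas hδ hδ₀ hδ₁
  refine ⟨by linarith, ENNReal.ofReal_le_of_le_toReal ?_⟩
  change _ ≤ μ.real {ω | ∀ t, IsGoodAt (χ · ω) t}
  linarith
end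

section
/- Fix T > 0 and 0 < η ≤ 1/(5√T), let d = max(25η²T², 1), and define f(w) = max(0, max_{i∈[d]} (1/√d − w[i] − ηi/(4d))) on ℝ^d. Then f is a convex 1-Lipschitz function, and for the iterates of (sub)gradient descent w_{t+1} = w_t − η·∇f(w_t) initialized at w₁ = 0: (i) every coordinate of every iterate w_t satisfies w_t[i] ≤ 1/(2√d); (ii) at every iterate the inner maximum over i is attained at a unique index with a strict margin of more than η/(8d) over all other indices and over 0; and (iii) every m-suffix average w̄ of the iterates satisfies f(w̄) − min_w f(w) ≥ 1/(4√d) = min(1/4, 1/(20ηT)). -/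
/-!
Gradient descent on `f` raises the coordinates in the cyclic order `0, 1, …, d - 1, 0, …`: the
offsets `η (i + 1) / (4d)` make the lowest index among the least-raised coordinates the maximiser
of `1/√d - w i - η (i + 1) / (4d)`, with margin `η / (4d)`, so near each iterate `f` is that single
affine piece and its gradient is `-e_j`. After `t < T` steps each coordinate is at most
`η (t / d + 1) ≤ 2 / (5√d)`, because `5ηT ≤ √d` and `5η√d ≤ 1`. So every iterate, and hence every
average of iterates, keeps every affine piece above `1 / (4√d)`, while `f` vanishes at the constant
vector `1 / √d`.
-/

open Topology Finset

section MaxAffine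

variable {ι : Type*}

noncomputable def maxAffine (c : ι → ℝ) (w : EuclideanSpace ℝ ι) : ℝ := max 0 (⨆ i, c i - w i)

variable {c : ι → ℝ}

theorem le_maxAffine [Finite ι] (w : EuclideanSpace ℝ ι) (i : ι) : c i - w i ≤ maxAffine c w :=
  (le_ciSup (f := fun i => c i - w i) (Finite.bddAbove_range _) i).trans (le_max_right _ _)

theorem maxAffine_nonneg (w : EuclideanSpace ℝ ι) : 0 ≤ maxAffine c w := le_max_left _ _

theorem maxAffine_le {w : EuclideanSpace ℝ ι} {B : ℝ} (hB : 0 ≤ B) (h : ∀ i, c i - w i ≤ B) :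
    maxAffine c w ≤ B :=
  max_le hB (Real.iSup_le h hB)

theorem maxAffine_eq_zero {w : EuclideanSpace ℝ ι} (h : ∀ i, c i ≤ w i) : maxAffine c w = 0 :=
  (maxAffine_le le_rfl fun i => sub_nonpos.2 (h i)).antisymm (maxAffine_nonneg w)

variable [Fintype ι]

theorem convexOn_maxAffine : ConvexOn ℝ Set.univ (maxAffine c) := by
  refine ⟨convex_univ, fun x _ y _ a b ha hb hab => ?_⟩
  have hx := maxAffine_nonneg (c := c) x
  have hy := maxAffine_nonneg (c := c) y
  refine maxAffine_le (by positivity) fun i => ?_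
  calc c i - (a • x + b • y) i = a * (c i - x i) + b * (c i - y i) := by
        simp only [PiLp.add_apply, PiLp.smul_apply, smul_eq_mul]
        linear_combination c i * hab.symm
    _ ≤ a • maxAffine c x + b • maxAffine c y := by
        simp only [smul_eq_mul]
        gcongr <;> exact le_maxAffine _ _

theorem lipschitzWith_maxAffine : LipschitzWith 1 (maxAffine c) :=
  LipschitzWith.of_le_add fun x y =>
    maxAffine_le (add_nonneg (maxAffine_nonneg y) dist_nonneg) fun i => by
      have hi := PiLp.dist_apply_le x y i
      rw [Real.dist_eq] at hi
      linarith [le_maxAffine (c := c) y i, neg_abs_le (x i - y i)]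

theorem maxAffine_eventuallyEq {w : EuclideanSpace ℝ ι} {j : ι} {δ : ℝ} (hδ : 0 < δ)
    (hj : δ < c j - w j) (hgap : ∀ k ≠ j, c k - w k + δ < c j - w j) :
    maxAffine c =ᶠ[𝓝 w] fun v => c j - v j := by
  filter_upwards [Metric.ball_mem_nhds w (half_pos hδ)] with v hv
  have hclose : ∀ i, |v i - w i| < δ / 2 := fun i =>
    (Real.dist_eq _ _ ▸ PiLp.dist_apply_le v w i).trans_lt hv
  refine le_antisymm (maxAffine_le ?_ fun k => ?_) (le_maxAffine v j)
  · linarith [abs_lt.1 (hclose j)]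
  · rcases eq_or_ne k j with rfl | hk
    · rfl
    · linarith [abs_lt.1 (hclose j), abs_lt.1 (hclose k), hgap k hk]

variable [DecidableEq ι]

theorem hasGradientAt_const_sub_apply (a : ℝ) (j : ι) (w : EuclideanSpace ℝ ι) :
    HasGradientAt (fun v : EuclideanSpace ℝ ι => a - v j) (-EuclideanSpace.single j 1) w := by
  have hdual : InnerProductSpace.toDual ℝ _ (-EuclideanSpace.single j 1) =
      -EuclideanSpace.proj (𝕜 := ℝ) j := by
    ext v
    simp [EuclideanSpace.inner_single_left]
  rw [hasGradientAt_iff_hasFDerivAt, hdual]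
  exact (EuclideanSpace.proj (𝕜 := ℝ) j).hasFDerivAt.const_sub a

theorem gradient_maxAffine {w : EuclideanSpace ℝ ι} {j : ι} {δ : ℝ} (hδ : 0 < δ)
    (hj : δ < c j - w j) (hgap : ∀ k ≠ j, c k - w k + δ < c j - w j) :
    gradient (maxAffine c) w = -EuclideanSpace.single j 1 :=
  ((hasGradientAt_const_sub_apply (c j) j w).congr_of_eventuallyEq
    (maxAffine_eventuallyEq hδ hj hgap)).gradient

end MaxAffine

theorem average_apply_le {α ι : Type*} [Fintype ι] {s : Finset α} (hs : s.Nonempty)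
    {x : α → EuclideanSpace ℝ ι} {i : ι} {B : ℝ} (h : ∀ a ∈ s, x a i ≤ B) :
    ((#s : ℝ)⁻¹ • ∑ a ∈ s, x a) i ≤ B := by
  rw [PiLp.smul_apply, WithLp.ofLp_sum, Finset.sum_apply, smul_eq_mul,
    inv_mul_le_iff₀ (Nat.cast_pos.2 hs.card_pos)]
  simpa using Finset.sum_le_card_nsmul _ _ _ h

/-- How often coordinate `i` is raised in the first `t` steps of the cyclic schedule
`0, 1, …, d - 1, 0, 1, …`. -/
def roundRobinCount (d t i : ℕ) : ℕ := t / d + if i < t % d then 1 else 0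

theorem roundRobinCount_zero (d i : ℕ) : roundRobinCount d 0 i = 0 := by
  simp [roundRobinCount]

theorem roundRobinCount_le (d t i : ℕ) : roundRobinCount d t i ≤ t / d + 1 := by
  unfold roundRobinCount
  split_ifs <;> omega

theorem roundRobinCount_succ {d t i : ℕ} (hi : i < d) :
    roundRobinCount d (t + 1) i = roundRobinCount d t i + if i = t % d then 1 else 0 := by
  have hd : 0 < d := by omega
  have ht := Nat.mod_add_div t d
  have hr := Nat.mod_lt t hd
  unfold roundRobinCount
  by_cases hwrap : t % d + 1 = d
  · obtain ⟨hq, hm⟩ : (t + 1) / d = t / d + 1 ∧ (t + 1) % d = 0 :=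
      (Nat.div_mod_unique hd).2 ⟨by rw [Nat.mul_add]; omega, hd⟩
    rw [hq, hm]
    split_ifs <;> omega
  · obtain ⟨hq, hm⟩ : (t + 1) / d = t / d ∧ (t + 1) % d = t % d + 1 :=
      (Nat.div_mod_unique hd).2 ⟨by omega, by omega⟩
    rw [hq, hm]
    split_ifs <;> omega

def roundRobinPoint (d t : ℕ) : EuclideanSpace ℝ (Fin d) :=
  WithLp.toLp 2 fun i => (roundRobinCount d t i : ℝ)

theorem roundRobinPoint_zero (d : ℕ) : roundRobinPoint d 0 = 0 := by
  ext i
  simp [roundRobinPoint, roundRobinCount_zero]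

theorem roundRobinPoint_succ {d : ℕ} [NeZero d] (t : ℕ) :
    roundRobinPoint d (t + 1) =
      roundRobinPoint d t + EuclideanSpace.single (Fin.ofNat d t) 1 := by
  ext i
  simp [roundRobinPoint, roundRobinCount_succ i.isLt, Fin.ext_iff]

noncomputable def staircase (d : ℕ) (η : ℝ) (i : Fin d) : ℝ :=
  1 / √d - η * ((i : ℕ) + 1) / (4 * d)

section Staircase

variable {d : ℕ} [NeZero d] {η : ℝ}

/-- Coordinates before the active one `t % d` were raised once more, which costs `η` against a
gain of less than `η / 4` in offset; those after it were raised equally often but carry larger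
offsets. -/
theorem staircase_sub_roundRobin_add_le (hη : 0 ≤ η) (t : ℕ) {k : Fin d}
    (hk : k ≠ Fin.ofNat d t) :
    staircase d η k - (η • roundRobinPoint d t) k + η / (4 * d)
      ≤ staircase d η (Fin.ofNat d t) - (η • roundRobinPoint d t) (Fin.ofNat d t) := by
  have hk' : (k : ℕ) ≠ t % d := fun h => hk (Fin.ext (by simpa using h))
  have hd : (0 : ℝ) < d := by exact_mod_cast Nat.pos_of_neZero d
  set a := η / (4 * d) with ha
  have ha0 : 0 ≤ a := by positivity
  have hηa : η = 4 * d * a := by rw [ha]; field_simp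
  simp only [staircase, roundRobinPoint, roundRobinCount, PiLp.smul_apply, smul_eq_mul,
    Fin.val_ofNat, lt_irrefl, if_false, mul_div_right_comm η, ← ha]
  rcases lt_or_gt_of_ne hk' with hlt | hgt
  · have : ((t % d : ℕ) : ℝ) + 1 ≤ d := by exact_mod_cast Nat.mod_lt t (Nat.pos_of_neZero d)
    have hk0 : (0 : ℝ) ≤ k := Nat.cast_nonneg _
    rw [if_pos hlt]
    push_cast
    nlinarith [mul_le_mul_of_nonneg_left this ha0]
  · have : ((t % d : ℕ) : ℝ) + 1 ≤ k := by exact_mod_cast hgt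
    rw [if_neg (by omega)]
    push_cast
    nlinarith [mul_le_mul_of_nonneg_left this ha0]

theorem smul_roundRobinPoint_apply_le (hη : 0 ≤ η) (hηd : 5 * η * √d ≤ 1) {T t : ℕ}
    (hηT : 5 * η * T ≤ √d) (ht : t < T) (i : Fin d) :
    (η • roundRobinPoint d t) i ≤ 1 / (2 * √d) := by
  have hd : (0 : ℝ) < d := by exact_mod_cast Nat.pos_of_neZero d
  have hs : 0 < √d := Real.sqrt_pos.2 hd
  have hcount : (roundRobinCount d t i : ℝ) ≤ T / d + 1 :=
    calc (roundRobinCount d t i : ℝ) ≤ ((t / d : ℕ) : ℝ) + 1 := by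
          exact_mod_cast roundRobinCount_le d t i
      _ ≤ t / d + 1 := by gcongr; exact Nat.cast_div_le
      _ ≤ T / d + 1 := by gcongr
  have hsteps : η * T / d ≤ 1 / (5 * √d) := by
    rw [div_le_div_iff₀ hd (by positivity)]
    nlinarith [mul_le_mul_of_nonneg_right hηT hs.le, Real.mul_self_sqrt hd.le]
  have hstep : η ≤ 1 / (5 * √d) := by
    rw [le_div_iff₀ (by positivity)]
    linarith
  have hsum : 1 / (5 * √d) + 1 / (5 * √d) ≤ 1 / (2 * √d) := by
    field_simp
    norm_num
  calc (η • roundRobinPoint d t) i = η * roundRobinCount d t i := rfl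
    _ ≤ η * (T / d + 1) := by gcongr
    _ = η * T / d + η := by ring
    _ ≤ 1 / (2 * √d) := by linarith

theorem quarter_le_staircase_sub (hη : 0 ≤ η) (hηd : 5 * η * √d ≤ 1)
    {v : EuclideanSpace ℝ (Fin d)} {i : Fin d} (hv : v i ≤ 1 / (2 * √d)) :
    1 / (4 * √d) ≤ staircase d η i - v i := by
  have hd : (0 : ℝ) < d := by exact_mod_cast Nat.pos_of_neZero d
  have hs : 0 < √d := Real.sqrt_pos.2 hd
  have hi : η * ((i : ℕ) + 1) / (4 * d) ≤ η / 4 := by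
    rw [div_le_div_iff₀ (by positivity) (by norm_num)]
    have : ((i : ℕ) : ℝ) + 1 ≤ d := by exact_mod_cast i.isLt
    nlinarith
  have hη4 : η / 4 ≤ 1 / (20 * √d) := by
    rw [le_div_iff₀ (by positivity)]
    linarith
  have : 1 / (4 * √d) + 1 / (20 * √d) + 1 / (2 * √d) ≤ 1 / √d := by
    field_simp
    norm_num
  unfold staircase
  linarith

theorem div_eight_mul_lt_one_div_four_mul_sqrt (hη : 0 ≤ η) (hηd : 5 * η * √d ≤ 1) :
    η / (8 * d) < 1 / (4 * √d) := by
  have hd : (1 : ℝ) ≤ d := by exact_mod_cast Nat.one_le_iff_ne_zero.2 (NeZero.ne d)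
  have hs : 0 < √d := Real.sqrt_pos.2 (by positivity)
  calc η / (8 * d) ≤ η / 8 := div_le_div_of_nonneg_left hη (by norm_num) (by linarith)
    _ < 1 / (4 * √d) := by
      rw [lt_div_iff₀ (by positivity)]
      linarith

theorem staircase_sub_roundRobin_margin (hη : 0 < η) (hηd : 5 * η * √d ≤ 1) {T t : ℕ}
    (hηT : 5 * η * T ≤ √d) (ht : t < T) :
    (∀ k ≠ Fin.ofNat d t, staircase d η k - (η • roundRobinPoint d t) k + η / (8 * d)
        < staircase d η (Fin.ofNat d t) - (η • roundRobinPoint d t) (Fin.ofNat d t)) ∧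
      η / (8 * d)
        < staircase d η (Fin.ofNat d t) - (η • roundRobinPoint d t) (Fin.ofNat d t) := by
  have hd : (0 : ℝ) < d := by exact_mod_cast Nat.pos_of_neZero d
  refine ⟨fun k hk => ?_, ?_⟩
  · refine lt_of_lt_of_le ?_ (staircase_sub_roundRobin_add_le hη.le t hk)
    have : η / (8 * d) < η / (4 * d) := div_lt_div_of_pos_left hη (by positivity) (by linarith)
    linarith
  · exact (div_eight_mul_lt_one_div_four_mul_sqrt hη.le hηd).trans_le
      (quarter_le_staircase_sub hη.le hηd (smul_roundRobinPoint_apply_le hη.le hηd hηT ht _))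

theorem gradientDescent_eq_smul_roundRobinPoint (hη : 0 < η) (hηd : 5 * η * √d ≤ 1) {T : ℕ}
    (hηT : 5 * η * T ≤ √d) {w : ℕ → EuclideanSpace ℝ (Fin d)} (hw0 : w 0 = 0)
    (hrec : ∀ t, w (t + 1) = w t - η • gradient (maxAffine (staircase d η)) (w t)) :
    ∀ t < T, w t = η • roundRobinPoint d t := by
  intro t
  induction t with
  | zero => intro _; rw [hw0, roundRobinPoint_zero, smul_zero]
  | succ t ih =>
    intro ht
    have hd : (0 : ℝ) < d := by exact_mod_cast Nat.pos_of_neZero d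
    obtain ⟨hgap, hpos⟩ := staircase_sub_roundRobin_margin hη hηd hηT (Nat.lt_of_succ_lt ht)
    rw [hrec, ih (Nat.lt_of_succ_lt ht), gradient_maxAffine (by positivity) hpos hgap,
      roundRobinPoint_succ, smul_add, smul_neg, sub_neg_eq_add]

end Staircase

theorem sqrt_max_sq_one {x : ℝ} (hx : 0 ≤ x) : √(max (x ^ 2) 1) = max x 1 := by
  rcases le_total x 1 with h | h
  · rw [max_eq_right h, max_eq_right (pow_le_one₀ hx h), Real.sqrt_one]
  · rw [max_eq_left h, max_eq_left (one_le_pow₀ h), Real.sqrt_sq hx]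

theorem one_div_mul_max_one {a x : ℝ} (ha : 0 < a) (hx : 0 < x) :
    1 / (a * max x 1) = min (1 / a) (1 / (a * x)) := by
  rcases le_total x 1 with h | h
  · rw [max_eq_right h, mul_one,
      min_eq_left (one_div_le_one_div_of_le (by positivity) (by nlinarith))]
  · rw [max_eq_left h, min_eq_right (one_div_le_one_div_of_le ha (by nlinarith))]

theorem five_mul_mul_max_le_one {η : ℝ} {T : ℕ} (hη : 0 ≤ η) (hT : 0 < T)
    (hη' : η ≤ 1 / (5 * √T)) : 5 * η * max (5 * η * T) 1 ≤ 1 := by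
  have hT1 : 1 ≤ √(T : ℝ) := Real.one_le_sqrt.2 (by exact_mod_cast hT)
  have hηT : 5 * η * √T ≤ 1 := by
    rw [le_div_iff₀ (by positivity)] at hη'
    linarith
  rw [mul_max_of_nonneg _ _ (by positivity), mul_one]
  refine max_le ?_ (by nlinarith)
  calc 5 * η * (5 * η * T) = (5 * η * √T) ^ 2 := by
        rw [mul_pow, Real.sq_sqrt (Nat.cast_nonneg T)]
        ring
    _ ≤ 1 := pow_le_one₀ (by positivity) hηT

/-- Lower bound construction for the `Ω(min(1, 1/(ηT)))` term.  Fix `T > 0`,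
`0 < η ≤ 1/(5√T)`, `d = max(25η²T², 1)`, and
`f(w) = max(0, max_{i ∈ [d]} (1/√d - w[i] - ηi/(4d)))` on `ℝ^d`.  Then `f` is convex and
`1`-Lipschitz, and for the gradient descent iterates `w_{t+1} = w_t - η·∇f(w_t)` started
at `w₁ := w 0 = 0`: (i) every coordinate of every iterate is at most `1/(2√d)`;
(ii) the inner maximum is attained at a unique index, with strict margin more than
`η/(8d)` over every other index and over `0`; and (iii) every `m`-suffix average `w̄`
satisfies `f(w̄) - min f ≥ 1/(4√d) = min(1/4, 1/(20ηT))` (where `min f = 0`). -/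
theorem gd_small_eta_lower_bound (T dd : ℕ) (hT : 0 < T)
    (η : ℝ) (hη : 0 < η) (hη' : η ≤ 1 / (5 * Real.sqrt T))
    (hdd : (dd : ℝ) = max (25 * η ^ 2 * (T : ℝ) ^ 2) 1)
    (f : EuclideanSpace ℝ (Fin dd) → ℝ)
    (hf : ∀ w, f w = max 0 (⨆ i : Fin dd,
      (1 / Real.sqrt dd - w i - η * ((i : ℕ) + 1) / (4 * dd))))
    (w : ℕ → EuclideanSpace ℝ (Fin dd))
    (hw0 : w 0 = 0)
    (hrec : ∀ t : ℕ, w (t + 1) = w t - η • gradient f (w t)) :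
    (ConvexOn ℝ Set.univ f ∧ LipschitzWith 1 f) ∧
    (∀ t < T, ∀ i : Fin dd, w t i ≤ 1 / (2 * Real.sqrt dd)) ∧
    (∀ t < T, ∃ j : Fin dd,
      (∀ k : Fin dd, k ≠ j →
        (1 / Real.sqrt dd - w t k - η * ((k : ℕ) + 1) / (4 * dd)) + η / (8 * dd)
          < 1 / Real.sqrt dd - w t j - η * ((j : ℕ) + 1) / (4 * dd)) ∧
      η / (8 * dd) < 1 / Real.sqrt dd - w t j - η * ((j : ℕ) + 1) / (4 * dd)) ∧
    ((∀ v, 0 ≤ f v) ∧ (∃ v, f v = 0) ∧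
      (1 : ℝ) / (4 * Real.sqrt dd) = min (1 / 4) (1 / (20 * η * T)) ∧
      ∀ m : ℕ, 1 ≤ m → m ≤ T →
        1 / (4 * Real.sqrt dd)
          ≤ f ((m : ℝ)⁻¹ • ∑ i ∈ Finset.range m, w (T - 1 - i))) := by
  have hs : √(dd : ℝ) = max (5 * η * T) 1 := by
    rw [hdd, show 25 * η ^ 2 * (T : ℝ) ^ 2 = (5 * η * T) ^ 2 by ring,
      sqrt_max_sq_one (by positivity)]
  have hdd1 : (1 : ℝ) ≤ dd := hdd ▸ le_max_right _ _
  have : NeZero dd := ⟨by rintro rfl; norm_num at hdd1⟩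
  have hηT : 5 * η * T ≤ √dd := hs ▸ le_max_left _ _
  have hηd : 5 * η * √dd ≤ 1 := hs ▸ five_mul_mul_max_le_one hη.le hT hη'
  obtain rfl : f = maxAffine (staircase dd η) := funext fun v => by
    rw [hf, maxAffine]
    exact congrArg _ (iSup_congr fun i => sub_right_comm _ _ _)
  have hiter := gradientDescent_eq_smul_roundRobinPoint hη hηd hηT hw0 hrec
  have hcoord : ∀ t < T, ∀ i, w t i ≤ 1 / (2 * √dd) := fun t ht i =>
    hiter t ht ▸ smul_roundRobinPoint_apply_le hη.le hηd hηT ht i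
  refine ⟨⟨convexOn_maxAffine, lipschitzWith_maxAffine⟩, hcoord, fun t ht => ⟨Fin.ofNat dd t, ?_⟩,
    maxAffine_nonneg, ⟨WithLp.toLp 2 fun _ => 1 / √dd, maxAffine_eq_zero fun i => ?_⟩, ?_,
    fun m hm hmT => ?_⟩
  · have hpiece : ∀ (v : EuclideanSpace ℝ (Fin dd)) (k : Fin dd),
        1 / √dd - v k - η * ((k : ℕ) + 1) / (4 * dd) = staircase dd η k - v k :=
      fun _ _ => sub_right_comm _ _ _
    simp only [hpiece, hiter t ht]
    exact staircase_sub_roundRobin_margin hη hηd hηT ht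
  · exact sub_le_self _ (by positivity)
  · rw [hs, one_div_mul_max_one four_pos (by positivity),
      show (4 : ℝ) * (5 * η * T) = 20 * η * T by ring]
  · calc 1 / (4 * √dd) ≤ staircase dd η 0 - ((m : ℝ)⁻¹ • ∑ i ∈ range m, w (T - 1 - i)) 0 :=
          quarter_le_staircase_sub hη.le hηd (by
            simpa using average_apply_le (nonempty_range_iff.2 (by omega))
              fun i (hi : i ∈ range m) => hcoord (T - 1 - i) (by omega) 0)
      _ ≤ _ := le_maxAffine _ 0
end

section
/- Let U be a set of unit vectors in ℝ^{d'} with |⟨u,v⟩| ≤ 1/8 for distinct u, v ∈ U, let η > 0, u₀ ∈ U, 3 ≤ m < T, and δ₂ < 3η/16 − η/64. Suppose w ∈ (ℝ^{d'})^T has blocks w^{(1)} = cηu₀ with −3/8 ≤ c ≤ 0, w^{(k)} = (η/8)u₀ for 2 ≤ k ≤ m−1, w^{(m)} = (η/2)u₀, and w^{(k)} = 0 for k > m. Consider ℓ₄(w) = max(δ₂, max_{u∈U, 1≤k<T} ((3/8)⟨u, w^{(k)}⟩ − (1/2)⟨u, w^{(k+1)}⟩)). Then the maximum is uniquely attained at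 (u, k) = (u₀, m) with value 3η/16, exceeding every other candidate term (and δ₂) by more than η/64; consequently ℓ₄ is differentiable at w with ∇ℓ₄(w) having block m equal to (3/8)u₀, block m+1 equal to −(1/2)u₀, and all other blocks zero. -/
/-!
Every block of `w` is a multiple of `u₀`, so each candidate term of `ℓ₄` at `w` is `⟪u, u₀⟫`
times a scalar read off the block coefficients. That scalar is `3η/16` at `k = m` and lies in
`[-η/2, 0]` for every other `k`; together with `|⟪u, u₀⟫| ≤ 1/8` for `u ≠ u₀` this puts every
other candidate (and `δ₂`) more than `η/64` below the one at `(u₀, m)`. There are finitely many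
candidates, all continuous, so this strict maximum persists near `w`: there `ℓ₄` is the linear
functional `v ↦ (3/8)⟪u₀, v⁽ᵐ⁾⟫ - (1/2)⟪u₀, v⁽ᵐ⁺¹⁾⟫`, whose gradient is read off.
-/

open RealInnerProductSpace Filter Topology

theorem Real.biSup_iSup_eq_of_forall_le {α ι : Type*} {U : Finset α} {f : α → ι → ℝ}
    {u₀ : α} (hu₀ : u₀ ∈ U) (i₀ : ι) (hle : ∀ u ∈ U, ∀ i, f u i ≤ f u₀ i₀)
    (h0 : 0 ≤ f u₀ i₀) :
    (⨆ u ∈ U, ⨆ i, f u i) = f u₀ i₀ := by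
  -- A row with `u ∉ U` is an empty supremum, which is `0` in `ℝ`.
  have hrow : ∀ u, (⨆ _ : u ∈ U, ⨆ i, f u i) ≤ f u₀ i₀ :=
    fun u => Real.iSup_le (fun hu => Real.iSup_le (hle u hu) h0) h0
  refine le_antisymm (Real.iSup_le hrow h0)
    (le_ciSup_of_le ⟨_, Set.forall_mem_range.2 hrow⟩ u₀ ?_)
  rw [ciSup_pos hu₀]
  exact le_ciSup ⟨_, Set.forall_mem_range.2 (hle u₀ hu₀)⟩ i₀

theorem eventuallyEq_max_biSup_of_lt {X α ι : Type*} [TopologicalSpace X] [Finite ι]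
    {U : Finset α} {f : α → ι → X → ℝ} {w : X} {u₀ : α} (hu₀ : u₀ ∈ U) {i₀ : ι} {δ : ℝ}
    (hf : ∀ u ∈ U, ∀ i, ContinuousAt (f u i) w) (hpos : 0 < f u₀ i₀ w)
    (hδ : δ < f u₀ i₀ w) (hlt : ∀ u ∈ U, ∀ i, u ≠ u₀ ∨ i ≠ i₀ → f u i w < f u₀ i₀ w) :
    (fun v => max δ (⨆ u ∈ U, ⨆ i, f u i v)) =ᶠ[𝓝 w] f u₀ i₀ := by
  have hmax : ∀ᶠ v in 𝓝 w, ∀ u ∈ U, ∀ i, f u i v ≤ f u₀ i₀ v := by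
    refine (eventually_all_finset U).2 fun u hu => eventually_all.2 fun i => ?_
    by_cases h : u = u₀ ∧ i = i₀
    · obtain ⟨rfl, rfl⟩ := h
      exact Eventually.of_forall fun _ => le_rfl
    · exact ((hf u hu i).eventually_lt (hf u₀ hu₀ i₀) (hlt u hu i (not_and_or.1 h))).mono
        fun _ => le_of_lt
  have hcont := hf u₀ hu₀ i₀
  filter_upwards [hmax, hcont.eventually (lt_mem_nhds hpos), hcont.eventually (lt_mem_nhds hδ)]
    with v hv hv_pos hv_δ
  rw [Real.biSup_iSup_eq_of_forall_le hu₀ i₀ hv hv_pos.le]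
  exact max_eq_right hv_δ.le

theorem hasGradientAt_inner_left {F : Type*} [NormedAddCommGroup F] [InnerProductSpace ℝ F]
    [CompleteSpace F] (p x : F) : HasGradientAt (fun v => ⟪p, v⟫) p x := by
  rw [hasGradientAt_iff_hasFDerivAt]
  exact (InnerProductSpace.toDual ℝ F p).hasFDerivAt

theorem PiLp.inner_ite_ite {E : Type*} [NormedAddCommGroup E] [InnerProductSpace ℝ E] {n m : ℕ}
    (hm : m + 1 < n) (x y : E) (v : PiLp 2 (fun _ : Fin n => E)) :
    ⟪(WithLp.equiv 2 (∀ _ : Fin n, E)).symm (fun k : Fin n =>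
        if k.val = m then x else if k.val = m + 1 then y else 0), v⟫
      = ⟪x, v ⟨m, by omega⟩⟫ + ⟪y, v ⟨m + 1, hm⟩⟫ := by
  rw [PiLp.inner_apply, Finset.sum_eq_add (⟨m, by omega⟩ : Fin n) ⟨m + 1, hm⟩
    (by simp [Fin.ext_iff]) ?_ (by simp) (by simp)]
  · simp
  · intro k _ hk
    simp only [ne_eq, Fin.ext_iff] at hk
    simp [hk.1, hk.2]

namespace RoundRobin

abbrev Index (T : ℕ) : Type := {k : ℕ // 1 ≤ k ∧ k < T}

instance (T : ℕ) : Finite (Index T) :=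
  (Set.finite_Ico 1 T).to_subtype

variable {E : Type*} [NormedAddCommGroup E] [InnerProductSpace ℝ E] {T : ℕ}

noncomputable def term (u : E) (v : PiLp 2 (fun _ : Fin (T + 1) => E)) (k : Index T) : ℝ :=
  (3 / 8) * ⟪u, v ⟨k.1, by omega⟩⟫ - (1 / 2) * ⟪u, v ⟨k.1 + 1, by omega⟩⟫

noncomputable def termCoeff (a : ℕ → ℝ) (k : ℕ) : ℝ :=
  (3 / 8) * a k - (1 / 2) * a (k + 1)

theorem continuous_term (u : E) (k : Index T) :
    Continuous fun v : PiLp 2 (fun _ : Fin (T + 1) => E) => term u v k := by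
  unfold term
  fun_prop

theorem term_eq_inner_mul {a : ℕ → ℝ} {u₀ : E} {v : PiLp 2 (fun _ : Fin (T + 1) => E)}
    (hv : ∀ j : Fin (T + 1), 1 ≤ j.val → v j = a j • u₀) (u : E) (k : Index T) :
    term u v k = ⟪u, u₀⟫ * termCoeff a k := by
  rw [term, termCoeff, hv _ k.2.1, hv _ (by simp), real_inner_smul_right, real_inner_smul_right]
  ring

theorem hasGradientAt_term [CompleteSpace E] (u₀ : E) (k : Index T)
    (w : PiLp 2 (fun _ : Fin (T + 1) => E)) :
    HasGradientAt (fun v => term u₀ v k)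
      ((WithLp.equiv 2 (∀ _ : Fin (T + 1), E)).symm fun j : Fin (T + 1) =>
        if j.val = k.1 then (3 / 8 : ℝ) • u₀
        else if j.val = k.1 + 1 then (-(1 / 2) : ℝ) • u₀ else 0) w := by
  convert hasGradientAt_inner_left _ w using 1
  ext v
  rw [PiLp.inner_ite_ite (by omega), real_inner_smul_left, real_inner_smul_left, term]
  ring

variable {m : ℕ} {c η : ℝ}

-- The coefficient of `u₀` in block `k` of the point `w` of the theorem.
noncomputable def profile (m : ℕ) (c η : ℝ) (k : ℕ) : ℝ :=
  if k = 1 then c * η else if k < m then η / 8 else if k = m then η / 2 else 0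

theorem eq_profile_smul (hm : 2 ≤ m) {u₀ : E} {w : PiLp 2 (fun _ : Fin (T + 1) => E)}
    (hw1 : ∀ k : Fin (T + 1), k.val = 1 → w k = (c * η) • u₀)
    (hwmid : ∀ k : Fin (T + 1), 2 ≤ k.val → k.val ≤ m - 1 → w k = (η / 8) • u₀)
    (hwm : ∀ k : Fin (T + 1), k.val = m → w k = (η / 2) • u₀)
    (hwtop : ∀ k : Fin (T + 1), m < k.val → w k = 0) (j : Fin (T + 1)) (hj : 1 ≤ j.val) :
    w j = profile m c η j • u₀ := by
  unfold profile
  split_ifs with h1 h2 h3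
  · exact hw1 j h1
  · exact hwmid j (by omega) (by omega)
  · exact hwm j h3
  · rw [hwtop j (by omega), zero_smul]

theorem termCoeff_profile_self (hm : 2 ≤ m) : termCoeff (profile m c η) m = 3 * η / 16 := by
  simp only [termCoeff, profile]
  split_ifs <;> first | omega | ring

theorem termCoeff_profile_mem (hm : 2 ≤ m) (hη : 0 ≤ η) (hc : -(3 / 8) ≤ c) (hc' : c ≤ 0)
    {k : ℕ} (hk : 1 ≤ k) (hkm : k ≠ m) :
    -(η / 2) ≤ termCoeff (profile m c η) k ∧ termCoeff (profile m c η) k ≤ 0 := by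
  simp only [termCoeff, profile]
  split_ifs <;> first | omega | constructor <;> nlinarith

theorem abs_termCoeff_profile_le (hm : 2 ≤ m) (hη : 0 ≤ η) (hc : -(3 / 8) ≤ c) (hc' : c ≤ 0)
    {k : ℕ} (hk : 1 ≤ k) : |termCoeff (profile m c η) k| ≤ η / 2 := by
  rcases eq_or_ne k m with rfl | hkm
  · rw [termCoeff_profile_self hm, abs_of_nonneg (by positivity)]
    linarith
  · obtain ⟨hlo, hhi⟩ := termCoeff_profile_mem hm hη hc hc' hk hkm
    exact abs_le.2 ⟨hlo, by linarith⟩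

theorem term_add_lt_of_ne (hm : 2 ≤ m) (hη : 0 < η) (hc : -(3 / 8) ≤ c) (hc' : c ≤ 0)
    {U : Finset E} (horth : ∀ u ∈ U, ∀ v ∈ U, u ≠ v → |⟪u, v⟫| ≤ 1 / 8)
    {u₀ : E} (hu₀ : u₀ ∈ U) (hu₀_self : ⟪u₀, u₀⟫ = 1) {w : PiLp 2 (fun _ : Fin (T + 1) => E)}
    (hw : ∀ j : Fin (T + 1), 1 ≤ j.val → w j = profile m c η j • u₀)
    (u : E) (hu : u ∈ U) (k : Index T) (hne : u ≠ u₀ ∨ k.1 ≠ m) :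
    term u w k + η / 64 < 3 * η / 16 := by
  rw [term_eq_inner_mul hw]
  by_cases huu : u = u₀
  · subst huu
    have hkm : k.1 ≠ m := hne.resolve_left (not_not_intro rfl)
    rw [hu₀_self, one_mul]
    linarith [(termCoeff_profile_mem hm hη.le hc hc' k.2.1 hkm).2]
  · have hprod : ⟪u, u₀⟫ * termCoeff (profile m c η) k ≤ η / 16 :=
      calc _ ≤ |⟪u, u₀⟫| * |termCoeff (profile m c η) k| := by
            rw [← abs_mul]; exact le_abs_self _
        _ ≤ 1 / 8 * (η / 2) := mul_le_mul (horth u hu u₀ hu₀ huu)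
            (abs_termCoeff_profile_le hm hη.le hc hc' k.2.1) (abs_nonneg _) (by norm_num)
        _ = η / 16 := by ring
    linarith

end RoundRobin

open RoundRobin in
/-- Unique maximizer and gradient of the round-robin term
`ℓ₄(w) = max(δ₂, max_{u ∈ U, 1 ≤ k < T} ((3/8)⟨u, w⁽ᵏ⁾⟩ - (1/2)⟨u, w⁽ᵏ⁺¹⁾⟩))` at a point
`w` whose blocks are `w⁽¹⁾ = cηu₀` with `-3/8 ≤ c ≤ 0`, `w⁽ᵏ⁾ = (η/8)u₀` for
`2 ≤ k ≤ m-1`, `w⁽ᵐ⁾ = (η/2)u₀`, and `w⁽ᵏ⁾ = 0` for `k > m`: the maximum is uniquely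
attained at `(u₀, m)` with value `3η/16`, exceeding every other candidate (and `δ₂`) by
more than `η/64`; hence `ℓ₄` is differentiable at `w` with gradient `(3/8)u₀` in block
`m`, `-(1/2)u₀` in block `m+1`, and `0` elsewhere.  (Blocks are indexed by `Fin (T+1)`,
block `0` being unused.) -/
theorem ell4_unique_max_gradient (d' T m : ℕ) (hm3 : 3 ≤ m) (hmT : m < T)
    (η δ₂ c : ℝ) (hη : 0 < η) (hδ₂ : δ₂ < 3 * η / 16 - η / 64)
    (hc : -(3 / 8) ≤ c) (hc' : c ≤ 0)
    (U : Finset (EuclideanSpace ℝ (Fin d')))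
    (hunit : ∀ u ∈ U, ‖u‖ = 1)
    (horth : ∀ u ∈ U, ∀ v ∈ U, u ≠ v → |⟪u, v⟫| ≤ 1 / 8)
    (u₀ : EuclideanSpace ℝ (Fin d')) (hu₀ : u₀ ∈ U)
    (w : PiLp 2 (fun _ : Fin (T + 1) => EuclideanSpace ℝ (Fin d')))
    (hw1 : ∀ k : Fin (T + 1), k.val = 1 → w k = (c * η) • u₀)
    (hwmid : ∀ k : Fin (T + 1), 2 ≤ k.val → k.val ≤ m - 1 → w k = (η / 8) • u₀)
    (hwm : ∀ k : Fin (T + 1), k.val = m → w k = (η / 2) • u₀)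
    (hwtop : ∀ k : Fin (T + 1), m < k.val → w k = 0)
    (ℓ₄ : PiLp 2 (fun _ : Fin (T + 1) => EuclideanSpace ℝ (Fin d')) → ℝ)
    (hℓ₄ : ∀ v, ℓ₄ v = max δ₂ (⨆ u ∈ U, ⨆ k : {k : ℕ // 1 ≤ k ∧ k < T},
      (3 / 8) * ⟪u, v ⟨k.1, by omega⟩⟫ - (1 / 2) * ⟪u, v ⟨k.1 + 1, by omega⟩⟫)) :
    ((3 / 8) * ⟪u₀, w ⟨m, by omega⟩⟫ - (1 / 2) * ⟪u₀, w ⟨m + 1, by omega⟩⟫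
        = 3 * η / 16) ∧
    (∀ u ∈ U, ∀ k : {k : ℕ // 1 ≤ k ∧ k < T}, u ≠ u₀ ∨ k.1 ≠ m →
      ((3 / 8) * ⟪u, w ⟨k.1, by omega⟩⟫ - (1 / 2) * ⟪u, w ⟨k.1 + 1, by omega⟩⟫)
          + η / 64
        < (3 / 8) * ⟪u₀, w ⟨m, by omega⟩⟫ - (1 / 2) * ⟪u₀, w ⟨m + 1, by omega⟩⟫) ∧
    (δ₂ + η / 64
        < (3 / 8) * ⟪u₀, w ⟨m, by omega⟩⟫ - (1 / 2) * ⟪u₀, w ⟨m + 1, by omega⟩⟫) ∧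
    DifferentiableAt ℝ ℓ₄ w ∧
    gradient ℓ₄ w =
      (WithLp.equiv 2 (∀ _ : Fin (T + 1), EuclideanSpace ℝ (Fin d'))).symm
        (fun k : Fin (T + 1) =>
          if k.val = m then (3 / 8 : ℝ) • u₀
          else if k.val = m + 1 then (-(1 / 2) : ℝ) • u₀
          else 0) := by
  have hm : 2 ≤ m := by omega
  have hw := eq_profile_smul hm hw1 hwmid hwm hwtop
  have hu₀_self : ⟪u₀, u₀⟫ = 1 := by
    rw [real_inner_self_eq_norm_sq, hunit u₀ hu₀, one_pow]
  set k₀ : Index T := ⟨m, by omega, hmT⟩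
  have hpeak : term u₀ w k₀ = 3 * η / 16 := by
    rw [term_eq_inner_mul hw, hu₀_self, one_mul]
    exact termCoeff_profile_self hm
  have hsep := term_add_lt_of_ne hm hη hc hc' horth hu₀ hu₀_self hw
  have hloc : ℓ₄ =ᶠ[𝓝 w] fun v => term u₀ v k₀ := by
    rw [funext hℓ₄]
    exact eventuallyEq_max_biSup_of_lt (f := fun u k v => term u v k) hu₀
      (fun u _ k => (continuous_term u k).continuousAt) (by linarith) (by linarith)
      fun u hu k hne => by linarith [hsep u hu k (hne.imp_right fun h h' => h (Subtype.ext h'))]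
  have hgrad := (hasGradientAt_term u₀ k₀ w).congr_of_eventuallyEq hloc
  exact ⟨hpeak, fun u hu k hne => (hsep u hu k hne).trans_eq hpeak.symm,
    (show δ₂ + η / 64 < 3 * η / 16 by linarith).trans_eq hpeak.symm, hgrad.differentiableAt,
    hgrad.gradient⟩
end
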